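/- arXiv:2603.29930 — 3 statements merged into one kernel-verified Lean document; each statement's English description precedes it below -/
import Mathlib

section
/- If 𝓘 ∈ 𝒟(I), then for any collection 𝓜 of subsets of I disjoint from 𝓘 (i.e., 𝓜 ⊆ 𝒫(I) \ 𝓘), there exists a maximal pairwise disjoint subfamily U ⊆ 𝓜, and moreover every pairwise disjoint subfamily of 𝒫(I) \ 𝓘 is finite. -/
/-!
The first part is Zorn's lemma: a union of a chain of pairwise disjoint subfamilies is pairwise
disjoint. For the second, an infinite disjoint family of sets outside `𝓘` contains a countably
infinite one `V`; the countability axiom puts `⋃₀ (V \ V₀)` in `𝓘` for a finite `V₀ ⊆ V`, and then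
every member of the nonempty family `V \ V₀` lies in `𝓘` by downward closure.
-/

/-- The class `𝒟(I)` of ideals appearing in studies of Chase's lemma. -/
def IsChaseIdeal {I : Type*} (𝓘 : Set (Set I)) : Prop :=
  Set.univ ∉ 𝓘 ∧
  (∀ s : Set I, s.Finite → s ∈ 𝓘) ∧
  (∀ s t : Set I, s ∈ 𝓘 → t ∈ 𝓘 → s ∪ t ∈ 𝓘) ∧
  (∀ s t : Set I, s ∈ 𝓘 → t ⊆ s → t ∈ 𝓘) ∧
  (∀ U : Set (Set I), U.Countable → U.PairwiseDisjoint id →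
    ∃ U₀ ⊆ U, U₀.Finite ∧ ⋃₀ (U \ U₀) ∈ 𝓘)

theorem Set.exists_maximal_pairwiseDisjoint_subset {ι α : Type*} [PartialOrder α] [OrderBot α]
    (f : ι → α) (𝓜 : Set ι) : ∃ U, Maximal (fun U ↦ U ⊆ 𝓜 ∧ U.PairwiseDisjoint f) U := by
  refine zorn_subset _ fun c hc hchain ↦ ⟨⋃₀ c, ⟨?_, ?_⟩, fun _ ↦ Set.subset_sUnion_of_mem⟩
  · exact Set.sUnion_subset fun U hU ↦ (hc hU).1
  · exact (hchain.pairwiseDisjoint_sUnion f).2 fun U hU ↦ (hc hU).2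

theorem Set.finite_of_pairwiseDisjoint_of_forall_notMem {I : Type*} {𝓘 : Set (Set I)}
    (hdown : ∀ s t : Set I, s ∈ 𝓘 → t ⊆ s → t ∈ 𝓘)
    (hcount : ∀ U : Set (Set I), U.Countable → U.PairwiseDisjoint id →
      ∃ U₀ ⊆ U, U₀.Finite ∧ ⋃₀ (U \ U₀) ∈ 𝓘)
    {U : Set (Set I)} (hU : ∀ s ∈ U, s ∉ 𝓘) (hUd : U.PairwiseDisjoint id) : U.Finite := by
  by_contra hinf
  obtain ⟨V, hVU, hVcount, hVinf⟩ := Set.Infinite.exists_subset_countable_infinite hinf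
  obtain ⟨V₀, -, hV₀, hrest⟩ := hcount V hVcount (hUd.subset hVU)
  obtain ⟨s, hs⟩ := (hVinf.sdiff hV₀).nonempty
  exact hU s (hVU hs.1) (hdown _ s hrest (Set.subset_sUnion_of_mem hs))

theorem chase_maximal_disjoint_family {I : Type*} (𝓘 : Set (Set I))
    (h𝓘 : IsChaseIdeal 𝓘) :
    (∀ 𝓜 : Set (Set I), (∀ s ∈ 𝓜, s ∉ 𝓘) →
      ∃ U ⊆ 𝓜, U.PairwiseDisjoint id ∧
        ∀ U' : Set (Set I), U' ⊆ 𝓜 → U'.PairwiseDisjoint id → U ⊆ U' → U' = U) ∧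
    (∀ U : Set (Set I), (∀ s ∈ U, s ∉ 𝓘) → U.PairwiseDisjoint id → U.Finite) := by
  obtain ⟨-, -, -, hdown, hcount⟩ := h𝓘
  refine ⟨fun 𝓜 _ ↦ ?_, fun U ↦ Set.finite_of_pairwiseDisjoint_of_forall_notMem hdown hcount⟩
  obtain ⟨U, ⟨hU𝓜, hUd⟩, hUmax⟩ := Set.exists_maximal_pairwiseDisjoint_subset id 𝓜
  exact ⟨U, hU𝓜, hUd, fun U' hU'𝓜 hU'd hUU' ↦ (hUmax ⟨hU'𝓜, hU'd⟩ hUU').antisymm hUU'⟩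
end

section
/- If 𝓘 ∈ 𝒟(I), then there exists a set M ⊆ I with M ∉ 𝓘 such that for every subset I' ⊆ M, either I' ∈ 𝓘 or M \ I' ∈ 𝓘. -/
namespace IsChaseIdeal

open Function Set

variable {I : Type*} {𝓘 : Set (Set I)}

theorem exists_pairwise_disjoint_notMem_of_split
    (hsplit : ∀ M ∉ 𝓘, ∃ N ⊆ M, N ∉ 𝓘 ∧ M \ N ∉ 𝓘) {M : Set I} (hM : M ∉ 𝓘) :
    ∃ A : ℕ → Set I, Pairwise (Disjoint on A) ∧ ∀ n, A n ∉ 𝓘 := by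
  choose piece piece_subset piece_notMem rest_notMem using hsplit
  let step : {M : Set I // M ∉ 𝓘} → {M : Set I // M ∉ 𝓘} :=
    fun M => ⟨M.1 \ piece M.1 M.2, rest_notMem _ _⟩
  let S : ℕ → {M : Set I // M ∉ 𝓘} := fun n => step^[n] ⟨M, hM⟩
  let A : ℕ → Set I := fun n => piece (S n).1 (S n).2
  have S_succ (n : ℕ) : (S (n + 1)).1 = (S n).1 \ A n := by
    simp only [S, iterate_succ_apply']
    rfl
  have S_anti : Antitone fun n => (S n).1 :=
    antitone_nat_of_succ_le fun n => (S_succ n).trans_subset sdiff_subset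
  refine ⟨A, (pairwise_disjoint_on A).2 fun m n hmn => ?_, fun n => piece_notMem _ _⟩
  have hAn : A n ⊆ (S m).1 \ A m :=
    (piece_subset _ _).trans ((S_anti (Nat.succ_le_of_lt hmn)).trans (S_succ m).subset)
  exact disjoint_sdiff_right.mono_right hAn

theorem exists_mem_of_pairwise_disjoint
    (hsub : ∀ s t : Set I, s ∈ 𝓘 → t ⊆ s → t ∈ 𝓘)
    (hdisj : ∀ U : Set (Set I), U.Countable → U.PairwiseDisjoint id →
      ∃ U₀ ⊆ U, U₀.Finite ∧ ⋃₀ (U \ U₀) ∈ 𝓘)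
    {A : ℕ → Set I} (hA : Pairwise (Disjoint on A)) : ∃ n, A n ∈ 𝓘 := by
  by_contra! hA𝓘
  have empty_mem : ∅ ∈ 𝓘 := by
    obtain ⟨U₀, -, -, hU₀⟩ := hdisj ∅ countable_empty pairwiseDisjoint_empty
    simpa using hU₀
  have A_inj : Injective A := by
    intro m n hmn
    by_contra hne
    have hdisj_self : Disjoint (A m) (A n) := hA hne
    rw [hmn, disjoint_self, bot_eq_empty] at hdisj_self
    exact hA𝓘 n (hdisj_self ▸ empty_mem)
  have hrange : (range A).PairwiseDisjoint id :=
    pairwiseDisjoint_range_iff.2 fun m n hne => hA fun h => hne (congrArg A h)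
  obtain ⟨U₀, -, hU₀, hrest⟩ := hdisj (range A) (countable_range A) hrange
  obtain ⟨n, hn⟩ := (hU₀.preimage A_inj.injOn).infinite_compl.nonempty
  exact hA𝓘 n (hsub _ _ hrest (subset_sUnion_of_mem ⟨mem_range_self n, hn⟩))

end IsChaseIdeal

theorem chase_exists_measure_one_set {I : Type*} (𝓘 : Set (Set I))
    (h𝓘 : IsChaseIdeal 𝓘) :
    ∃ M : Set I, M ∉ 𝓘 ∧ ∀ I' ⊆ M, I' ∈ 𝓘 ∨ M \ I' ∈ 𝓘 := by
  obtain ⟨huniv, -, -, hsub, hdisj⟩ := h𝓘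
  by_contra! hsplit
  obtain ⟨A, hA, hA𝓘⟩ := IsChaseIdeal.exists_pairwise_disjoint_notMem_of_split hsplit huniv
  obtain ⟨n, hn⟩ := IsChaseIdeal.exists_mem_of_pairwise_disjoint hsub hdisj hA
  exact hA𝓘 n hn
end

section
/- Let k be a complete nonarchimedean valued field with nontrivial valuation, I a countable set, J a set, V a family of Banach k-vector spaces indexed by I, W a family of Banach k-vector spaces indexed by J, and f : ∏V → ⊕W a nonzero bounded k-linear map, where ∏V is the bounded product with sup norm and ⊕W ⊆ ∏W is the closed subspace of elements x with {j : ‖x(j)‖ > ε} finite for every ε > 0. Then for every r ∈ (0,∞) there exist r' > ‖f‖⁻¹ r, a finite subset I₀ ⊆ I, and a finite subset J₀ ⊆ J such that f maps { x ∈ ∏V : x(i) = 0 for all i ∈ I₀, and ‖x(i)‖ ≤ r' for all i } into { y ∈ ⊕W : ‖y(j)‖ ≤ r for all j ∉ J₀ }. -/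
/-!
Suppose the statement fails at radius `r`. Then for every `ρ > ‖f‖⁻¹ r` there are vectors of
norm `≤ ρ` vanishing on any prescribed finite set of coordinates whose image is `> r` at some
coordinate outside any prescribed finite set. Enumerating `I`, we add such vectors one at a time:
the `n`-th one pushes a new coordinate `j n` of the image above `r`, and the next radius is taken
below `‖f (s (n + 1)) (j n)‖ / ‖f‖`. The partial sums stabilise coordinatewise, hence have a limit
`y ∈ ∏ V` lying within the next radius of each of them; by the ultrametric inequality the later
increments cannot lower the coordinates already pushed up, so `f y` is `> r` at every `j n`,
contradicting `f y ∈ ⊕ W`.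
-/

open scoped ENNReal
open Filter Topology

theorem exists_seq_of_forall_exists_succ {α : Type*} {P : α → Prop} {T : ℕ → α → α → Prop}
    (h₀ : ∃ a, P a) (h : ∀ n a, P a → ∃ b, P b ∧ T n a b) :
    ∃ u : ℕ → α, ∀ n, T n (u n) (u (n + 1)) := by
  obtain ⟨a₀, ha₀⟩ := h₀
  choose! next hnext using h
  let u : ℕ → α := fun n => Nat.rec a₀ next n
  have hu : ∀ n, P (u n) := fun n => Nat.rec ha₀ (fun n ih => (hnext n _ ih).1) n
  exact ⟨u, fun n => (hnext n _ (hu n)).2⟩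

theorem exists_gt_le_mul_lt {a b c t : ℝ} (hbc : b < c) (h : a * b < t) :
    ∃ ρ, b < ρ ∧ ρ ≤ c ∧ a * ρ < t := by
  have hnear : ∀ᶠ ρ in 𝓝 b, ρ < c ∧ a * ρ < t :=
    (eventually_lt_nhds hbc).and (((continuous_const_mul a).tendsto b).eventually
      (eventually_lt_nhds h))
  obtain ⟨ρ, ⟨hρc, hρt⟩, hbρ⟩ :=
    ((hnear.filter_mono nhdsWithin_le_nhds).and (self_mem_nhdsWithin (s := Set.Ioi b))).exists
  exact ⟨ρ, hbρ, hρc.le, hρt⟩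

namespace IsUltrametricDist

variable {E : Type*} [SeminormedAddCommGroup E] [IsUltrametricDist E]

theorem norm_add_eq_right_of_norm_lt {a b : E} (h : ‖a‖ < ‖b‖) : ‖a + b‖ = ‖b‖ := by
  rw [norm_add_eq_max_of_norm_ne_norm h.ne, max_eq_right h.le]

theorem norm_sub_le_of_norm_succ_sub_le {s : ℕ → E} {ρ : ℕ → ℝ} (hρ : Antitone ρ)
    (hs : ∀ n, ‖s (n + 1) - s n‖ ≤ ρ n) {m n : ℕ} (hnm : n ≤ m) : ‖s m - s n‖ ≤ ρ n := by
  induction m, hnm using Nat.le_induction with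
  | base => simpa using (norm_nonneg _).trans (hs n)
  | succ m hnm ih =>
    rw [← sub_add_sub_cancel]
    exact (norm_add_le_max _ _).trans (max_le ((hs m).trans (hρ hnm)) ih)

end IsUltrametricDist

namespace lp

variable {I : Type*} {V : I → Type*} [∀ i, NormedAddCommGroup (V i)]

instance [∀ i, IsUltrametricDist (V i)] : IsUltrametricDist (lp V ∞) :=
  IsUltrametricDist.isUltrametricDist_of_forall_norm_add_le_max_norm fun x y =>
    norm_le_of_forall_le ((norm_nonneg x).trans (le_max_left _ _)) fun i =>
      (IsUltrametricDist.norm_add_le_max (x i) (y i)).trans <|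
        max_le_max (norm_apply_le_norm ENNReal.top_ne_zero x i)
          (norm_apply_le_norm ENNReal.top_ne_zero y i)

theorem norm_apply_eq_of_norm_sub_lt [∀ i, IsUltrametricDist (V i)] {x y : lp V ∞} {i : I}
    (h : ‖x - y‖ < ‖y i‖) : ‖x i‖ = ‖y i‖ := by
  have hi : ‖x i - y i‖ < ‖y i‖ := (norm_apply_le_norm ENNReal.top_ne_zero (x - y) i).trans_lt h
  simpa using IsUltrametricDist.norm_add_eq_right_of_norm_lt hi

theorem exists_norm_sub_le_of_eventuallyConst {s : ℕ → lp V ∞} {R : ℕ → ℝ}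
    (hs : ∀ i, EventuallyConst (fun n => s n i) atTop)
    (hR : ∀ n m, n ≤ m → ‖s m - s n‖ ≤ R n) : ∃ y : lp V ∞, ∀ n, ‖y - s n‖ ≤ R n := by
  choose y hy using fun i => eventuallyConst_iff_exists_eventuallyEq.1 (hs i)
  have hbound : ∀ n i, ‖y i - s n i‖ ≤ R n := fun n i => by
    obtain ⟨m, hnm, hm⟩ := ((eventually_ge_atTop n).and (hy i)).exists
    rw [← show s m i = y i from hm]
    exact (norm_apply_le_norm ENNReal.top_ne_zero (s m - s n) i).trans (hR n m hnm)
  have hmem : Memℓp (y - ⇑(s 0)) ∞ :=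
    memℓp_infty ⟨R 0, by rintro _ ⟨i, rfl⟩; exact hbound 0 i⟩
  have hy_mem : Memℓp y ∞ := by simpa using hmem.add (s 0).2
  exact ⟨⟨y, hy_mem⟩, fun n =>
    norm_le_of_forall_le ((norm_nonneg _).trans (hR n n le_rfl)) (hbound n)⟩

end lp

section Chase

variable {k : Type*} [NontriviallyNormedField k] {I J : Type*}
  {V : I → Type*} [∀ i, NormedAddCommGroup (V i)] [∀ i, NormedSpace k (V i)]
  {W : J → Type*} [∀ j, NormedAddCommGroup (W j)] [∀ j, NormedSpace k (W j)]

/-- Partial sums `s n` whose `n`-th increment pushes the coordinate `j n` of the image above `r`,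
by a margin over `‖f‖ ρ (n + 1)` that the later increments, of norm `≤ ρ (n + 1)`, cannot undo. -/
structure IsChase (f : lp V ∞ →L[k] lp W ∞) (r : ℝ) (s : ℕ → lp V ∞) (j : ℕ → J)
    (ρ : ℕ → ℝ) : Prop where
  eventuallyConst_apply : ∀ i, EventuallyConst (fun n => s n i) atTop
  norm_succ_sub_le : ∀ n, ‖s (n + 1) - s n‖ ≤ ρ n
  antitone : Antitone ρ
  norm_apply_le : ∀ n, ‖f (s n) (j n)‖ ≤ r
  lt_norm_apply_succ : ∀ n, r < ‖f (s (n + 1)) (j n)‖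
  opNorm_mul_lt_norm_apply_succ : ∀ n, ‖f‖ * ρ (n + 1) < ‖f (s (n + 1)) (j n)‖

theorem exists_isChase [Countable I] [∀ j, IsUltrametricDist (W j)]
    {f : lp V ∞ →L[k] lp W ∞} {r b : ℝ} (hb₀ : 0 ≤ b) (hb : ‖f‖ * b ≤ r)
    (hf_range : ∀ x : lp V ∞, {j | r < ‖f x j‖}.Finite)
    (hfail : ∀ ρ, b < ρ → ∀ I₀ : Set I, I₀.Finite → ∀ J₀ : Set J, J₀.Finite →
      ∃ x : lp V ∞, (∀ i ∈ I₀, x i = 0) ∧ (∀ i, ‖x i‖ ≤ ρ) ∧ ∃ j ∉ J₀, r < ‖f x j‖) :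
    ∃ s j ρ, IsChase f r s j ρ := by
  obtain ⟨g, hg⟩ := Countable.exists_injective_nat I
  have step : ∀ (n : ℕ) (a : lp V ∞ × ℝ), b < a.2 → ∃ a' : lp V ∞ × ℝ, b < a'.2 ∧ ∃ j,
      (∀ i, g i ≤ n → a'.1 i = a.1 i) ∧ ‖a'.1 - a.1‖ ≤ a.2 ∧ a'.2 ≤ a.2 ∧
        ‖f a.1 j‖ ≤ r ∧ r < ‖f a'.1 j‖ ∧ ‖f‖ * a'.2 < ‖f a'.1 j‖ := by
    rintro n ⟨s, ρ⟩ (hρ : b < ρ)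
    obtain ⟨x, hx0, hxρ, j, hj, hjx⟩ :=
      hfail ρ hρ {i | g i ≤ n} ((Set.finite_Iic n).preimage hg.injOn) _ (hf_range s)
    have hsj : ‖f s j‖ ≤ r := not_lt.1 hj
    have hsx : r < ‖f (s + x) j‖ := by
      rwa [map_add, lp.coeFn_add, Pi.add_apply,
        IsUltrametricDist.norm_add_eq_right_of_norm_lt (hsj.trans_lt hjx)]
    obtain ⟨ρ', hbρ', hρ'ρ, hρ'⟩ := exists_gt_le_mul_lt hρ (hb.trans_lt hsx)
    refine ⟨(s + x, ρ'), hbρ', j, fun i hi => by simp [hx0 i hi], ?_, hρ'ρ, hsj, hsx, hρ'⟩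
    simpa using lp.norm_le_of_forall_le (hb₀.trans hρ.le) hxρ
  obtain ⟨u, hu⟩ := exists_seq_of_forall_exists_succ ⟨((0 : lp V ∞), b + 1), by simp⟩ step
  choose j hconst hsub hρ hle hlt hmul using hu
  refine ⟨fun n => (u n).1, j, fun n => (u n).2, fun i => ?_, hsub,
    antitone_nat_of_succ_le hρ, hle, hlt, hmul⟩
  exact eventuallyConst_atTop_nat.2 ⟨g i, fun m hm => hconst m i hm⟩

namespace IsChase

variable {f : lp V ∞ →L[k] lp W ∞} {r : ℝ} {s : ℕ → lp V ∞} {j : ℕ → J} {ρ : ℕ → ℝ}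

theorem norm_sub_le [∀ i, IsUltrametricDist (V i)] (h : IsChase f r s j ρ) {m n : ℕ}
    (hnm : n ≤ m) : ‖s m - s n‖ ≤ ρ n :=
  IsUltrametricDist.norm_sub_le_of_norm_succ_sub_le h.antitone h.norm_succ_sub_le hnm

theorem lt_norm_apply_of_norm_sub_le [∀ j, IsUltrametricDist (W j)] (h : IsChase f r s j ρ)
    {n : ℕ} {z : lp V ∞} (hz : ‖z - s (n + 1)‖ ≤ ρ (n + 1)) : r < ‖f z (j n)‖ := by
  have hclose : ‖f z - f (s (n + 1))‖ < ‖f (s (n + 1)) (j n)‖ := by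
    rw [← map_sub]
    exact (f.le_opNorm _).trans_lt <|
      (mul_le_mul_of_nonneg_left hz (norm_nonneg f)).trans_lt (h.opNorm_mul_lt_norm_apply_succ n)
  rw [lp.norm_apply_eq_of_norm_sub_lt hclose]
  exact h.lt_norm_apply_succ n

theorem injective [∀ i, IsUltrametricDist (V i)] [∀ j, IsUltrametricDist (W j)]
    (h : IsChase f r s j ρ) : Function.Injective j :=
  .of_lt_imp_ne fun a c hac hj => by
    have hlt := h.lt_norm_apply_of_norm_sub_le (h.norm_sub_le hac)
    rw [hj] at hlt
    exact (h.norm_apply_le c).not_gt hlt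

theorem exists_infinite_setOf_lt_norm_apply [∀ i, IsUltrametricDist (V i)]
    [∀ j, IsUltrametricDist (W j)] (h : IsChase f r s j ρ) :
    ∃ y : lp V ∞, {j' | r < ‖f y j'‖}.Infinite := by
  obtain ⟨y, hy⟩ :=
    lp.exists_norm_sub_le_of_eventuallyConst h.eventuallyConst_apply fun _ _ => h.norm_sub_le
  exact ⟨y, Set.infinite_of_injective_forall_mem h.injective fun n =>
    h.lt_norm_apply_of_norm_sub_le (hy (n + 1))⟩

end IsChase

end Chase

theorem nonarchimedean_chase_lemma_general
    {k : Type*} [NontriviallyNormedField k]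
    {I J : Type*} [Countable I]
    (V : I → Type*) [∀ i, NormedAddCommGroup (V i)] [∀ i, NormedSpace k (V i)]
    [∀ i, IsUltrametricDist (V i)]
    (W : J → Type*) [∀ j, NormedAddCommGroup (W j)] [∀ j, NormedSpace k (W j)]
    [∀ j, IsUltrametricDist (W j)]
    (f : lp V ∞ →L[k] lp W ∞)
    (hf_range : ∀ x : lp V ∞, ∀ ε > (0 : ℝ), {j : J | ε < ‖f x j‖}.Finite) :
    ∀ r : ℝ, 0 < r →
      ∃ r' : ℝ, ‖f‖⁻¹ * r < r' ∧
        ∃ I₀ : Set I, I₀.Finite ∧ ∃ J₀ : Set J, J₀.Finite ∧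
          ∀ x : lp V ∞, (∀ i ∈ I₀, x i = 0) → (∀ i, ‖x i‖ ≤ r') →
            ∀ j ∉ J₀, ‖f x j‖ ≤ r := by
  intro r hr
  by_contra! hfail
  have hb : ‖f‖ * (‖f‖⁻¹ * r) ≤ r := by
    rw [← mul_assoc]
    exact mul_le_of_le_one_left hr.le mul_inv_le_one
  obtain ⟨s, j, ρ, hchase⟩ := exists_isChase (by positivity) hb (fun x => hf_range x r hr) hfail
  obtain ⟨y, hy⟩ := hchase.exists_infinite_setOf_lt_norm_apply
  exact hy (hf_range y r hr)

theorem nonarchimedean_chase_lemma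
    {k : Type*} [NontriviallyNormedField k] [CompleteSpace k] [IsUltrametricDist k]
    {I J : Type*} [Countable I]
    (V : I → Type*) [∀ i, NormedAddCommGroup (V i)] [∀ i, NormedSpace k (V i)]
    [∀ i, CompleteSpace (V i)] [∀ i, IsUltrametricDist (V i)]
    (W : J → Type*) [∀ j, NormedAddCommGroup (W j)] [∀ j, NormedSpace k (W j)]
    [∀ j, CompleteSpace (W j)] [∀ j, IsUltrametricDist (W j)]
    (f : lp V ∞ →L[k] lp W ∞)
    (hf_range : ∀ x : lp V ∞, ∀ ε > (0 : ℝ), {j : J | ε < ‖f x j‖}.Finite)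
    (hf_ne : f ≠ 0) :
    ∀ r : ℝ, 0 < r →
      ∃ r' : ℝ, ‖f‖⁻¹ * r < r' ∧
        ∃ I₀ : Set I, I₀.Finite ∧ ∃ J₀ : Set J, J₀.Finite ∧
          ∀ x : lp V ∞, (∀ i ∈ I₀, x i = 0) → (∀ i, ‖x i‖ ≤ r') →
            ∀ j ∉ J₀, ‖f x j‖ ≤ r :=
  nonarchimedean_chase_lemma_general V W f hf_range
end
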